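/- Let μ be a finite Borel measure on ℝⁿ and 0 ≤ α < n. Then the set {x ∈ ℝⁿ : M_α μ(x) = ∞} has (n-α)-dimensional Hausdorff measure zero; in particular M_α μ(x) < ∞ for ℋ^{n-α}-almost every x ∈ ℝⁿ. -/

import Mathlib

/-!
Up to the constant `|B₁|⁻¹`, `M_α μ(x)` is bounded by `sup_{r>0} μ(B̄_r(x)) / r^s` with
`s = n - α`. Where this supremum is infinite, for every `K` there are closed balls `B̄_r(x)` with
`K r^s < μ(B̄_r(x))`; their radii are bounded because `μ` is finite. The Vitali covering lemma
extracts a disjoint subfamily whose fourfold enlargements cover the set, so the set has covers with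
`∑ diam^s ≤ 8^s μ(ℝⁿ) / K`. Each diameter is then also small, and letting `K → ∞` shows that the
`s`-dimensional Hausdorff measure vanishes. This works in any metric space.
-/

open MeasureTheory
open scoped ENNReal

/-- The fractional maximal function `M_α μ(x) = sup_{r>0} r^α μ(B_r(x))/|B_r(x)|`. -/
noncomputable def fracMax (n : ℕ) (α : ℝ) (μ : Measure (EuclideanSpace ℝ (Fin n)))
    (x : EuclideanSpace ℝ (Fin n)) : ℝ≥0∞ :=
  ⨆ (r : ℝ) (_ : 0 < r),
    ENNReal.ofReal (r ^ α) * μ (Metric.ball x r) / volume (Metric.ball x r)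

open Metric Filter Topology Function

section

variable {X : Type*} {s : ℝ}

theorem hausdorffMeasure_eq_zero_of_forall_exists_cover [EMetricSpace X] [MeasurableSpace X]
    [BorelSpace X] {ι : Type*} (hs : 0 < s) {E : Set X}
    (h : ∀ ε : ℝ≥0∞, 0 < ε → ∃ (u : Set ι) (t : ι → Set X),
      u.Countable ∧ E ⊆ ⋃ i ∈ u, t i ∧ ∑' i : u, ediam (t i) ^ s ≤ ε) :
    μH[s] E = 0 := by
  choose u t hu hEt hsum using
    fun m : ℕ ↦ h (m : ℝ≥0∞)⁻¹ (ENNReal.inv_pos.2 (ENNReal.natCast_ne_top m))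
  have : ∀ m, Countable (u m) := fun m ↦ (hu m).to_subtype
  have hε : Tendsto (fun m : ℕ ↦ (m : ℝ≥0∞)⁻¹) atTop (𝓝 0) := ENNReal.tendsto_inv_nat_nhds_zero
  have hδ : Tendsto (fun m : ℕ ↦ (m : ℝ≥0∞)⁻¹ ^ s⁻¹) atTop (𝓝 0) := by
    simpa [ENNReal.zero_rpow_of_pos (inv_pos.2 hs)] using hε.ennrpow_const s⁻¹
  -- a single term is bounded by the whole sum, so the covers have small diameters
  have hdiam : ∀ m (i : u m), ediam (t m i) ≤ (m : ℝ≥0∞)⁻¹ ^ s⁻¹ := fun m i ↦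
    (ENNReal.le_rpow_inv_iff hs).2 ((ENNReal.le_tsum i).trans (hsum m))
  have hcover : ∀ m, E ⊆ ⋃ i : u m, t m i := fun m ↦ by
    simpa only [Set.biUnion_eq_iUnion] using hEt m
  refine nonpos_iff_eq_zero.1 ?_
  calc μH[s] E ≤ liminf (fun m ↦ ∑' i : u m, ediam (t m i) ^ s) atTop :=
        Measure.hausdorffMeasure_le_liminf_tsum s E _ hδ (fun m (i : u m) ↦ t m i)
          (.of_forall hdiam) (.of_forall hcover)
    _ ≤ liminf (fun m : ℕ ↦ (m : ℝ≥0∞)⁻¹) atTop := liminf_le_liminf (.of_forall hsum)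
    _ = 0 := hε.liminf_eq

variable [PseudoMetricSpace X]

theorem ediam_closedBall_le {x : X} {r : ℝ} (hr : 0 ≤ r) :
    ediam (closedBall x r) ≤ 2 * ENNReal.ofReal r := by
  simpa only [closedEBall_ofReal hr] using ediam_closedEBall_le (x := x) (r := ENNReal.ofReal r)

variable [MeasurableSpace X]

noncomputable def maximalDensity (μ : Measure X) (s : ℝ) (x : X) : ℝ≥0∞ :=
  ⨆ (r : ℝ) (_ : 0 < r), μ (closedBall x r) / ENNReal.ofReal r ^ s

variable {μ : Measure X}

theorem exists_mul_rpow_lt_measure_closedBall {K : ℝ≥0∞} {x : X}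
    (h : K < maximalDensity μ s x) :
    ∃ r > 0, K * ENNReal.ofReal r ^ s < μ (closedBall x r) := by
  simp only [maximalDensity, lt_iSup_iff] at h
  obtain ⟨r, hr, h⟩ := h
  have hr' : 0 < ENNReal.ofReal r := ENNReal.ofReal_pos.2 hr
  exact ⟨r, hr, (ENNReal.lt_div_iff_mul_lt (.inl (ENNReal.rpow_pos hr' ENNReal.ofReal_ne_top).ne')
    (.inl (ENNReal.rpow_ne_top_of_ne_zero hr'.ne' ENNReal.ofReal_ne_top))).1 h⟩

theorem exists_countable_cover_tsum_ediam_rpow_le [OpensMeasurableSpace X] [IsFiniteMeasure μ]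
    (hs : 0 < s) {K : ℝ≥0∞} (hK : K ≠ 0) {E : Set X} (hE : ∀ x ∈ E, K < maximalDensity μ s x) :
    ∃ (u : Set X) (t : X → Set X), u.Countable ∧ E ⊆ ⋃ b ∈ u, t b ∧
      K * ∑' b : u, ediam (t b) ^ s ≤ 8 ^ s * μ Set.univ := by
  choose! r hr0 hr using fun x hx ↦ exists_mul_rpow_lt_measure_closedBall (hE x hx)
  have hrR : ∀ x ∈ E, r x ≤ ((μ Set.univ / K) ^ s⁻¹).toReal := by
    intro x hx
    have : ENNReal.ofReal (r x) ^ s ≤ μ Set.univ / K :=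
      (ENNReal.le_div_iff_mul_le (.inl hK) (.inr (measure_ne_top μ _))).2 <| by
        rw [mul_comm]; exact (hr x hx).le.trans (measure_mono (Set.subset_univ _))
    rw [← ENNReal.ofReal_le_iff_le_toReal <| ENNReal.rpow_ne_top_of_nonneg (inv_nonneg.2 hs.le)
      (ENNReal.div_ne_top (measure_ne_top μ _) hK)]
    exact (ENNReal.le_rpow_inv_iff hs).2 this
  obtain ⟨u, huE, hdisj, hcov⟩ :=
    Vitali.exists_disjoint_subfamily_covering_enlargement_closedBall E id r _ hrR 4 (by norm_num)
  have hdisj' : Pairwise (Disjoint on fun b : u ↦ closedBall (b : X) (r b)) :=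
    (pairwise_subtype_iff_pairwise_set u _).2 hdisj
  -- no separability needed: the balls are disjoint, of positive measure, and `μ` is finite
  have hu : u.Countable := by
    have hpos : {b : u | 0 < μ (closedBall (b : X) (r b))} = Set.univ :=
      Set.eq_univ_of_forall fun b ↦ zero_le.trans_lt (hr b (huE b.2))
    have := Measure.countable_meas_pos_of_disjoint_iUnion (μ := μ)
      (fun _ ↦ measurableSet_closedBall) hdisj'
    rw [hpos, Set.countable_univ_iff] at this
    exact Set.countable_coe_iff.1 this
  refine ⟨u, fun b ↦ closedBall b (4 * r b), hu, fun x hx ↦ ?_, ?_⟩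
  · obtain ⟨b, hb, hxb⟩ := hcov x hx
    exact Set.mem_biUnion hb (hxb (mem_closedBall_self (hr0 x hx).le))
  calc K * ∑' b : u, ediam (closedBall (b : X) (4 * r b)) ^ s
      ≤ K * ∑' b : u, 8 ^ s * ENNReal.ofReal (r b) ^ s := by
        gcongr with b
        rw [← ENNReal.mul_rpow_of_nonneg _ _ hs.le]
        gcongr
        calc ediam (closedBall (b : X) (4 * r b)) ≤ 2 * ENNReal.ofReal (4 * r b) :=
              ediam_closedBall_le (by linarith [hr0 b (huE b.2)])
          _ = 8 * ENNReal.ofReal (r b) := by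
              rw [ENNReal.ofReal_mul (by norm_num), ENNReal.ofReal_ofNat, ← mul_assoc]; norm_num
    _ = 8 ^ s * ∑' b : u, K * ENNReal.ofReal (r b) ^ s := by
        rw [ENNReal.tsum_mul_left, ENNReal.tsum_mul_left]; ring
    _ ≤ 8 ^ s * ∑' b : u, μ (closedBall (b : X) (r b)) := by
        gcongr with b
        exact (hr b (huE b.2)).le
    _ ≤ 8 ^ s * μ Set.univ := by
        gcongr
        exact tsum_measure_le_measure_univ (fun _ ↦ measurableSet_closedBall.nullMeasurableSet)
          fun _ _ h ↦ (hdisj' h).aedisjoint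

end

theorem hausdorffMeasure_setOf_maximalDensity_eq_top {X : Type*} [MetricSpace X]
    [MeasurableSpace X] [BorelSpace X] (μ : Measure X) [IsFiniteMeasure μ] {s : ℝ} (hs : 0 < s) :
    μH[s] {x | maximalDensity μ s x = ⊤} = 0 := by
  refine hausdorffMeasure_eq_zero_of_forall_exists_cover (ι := X) hs fun ε hε ↦ ?_
  obtain ⟨K, hK⟩ := ENNReal.exists_nat_mul_gt hε.ne'
    (ENNReal.mul_ne_top (ENNReal.rpow_ne_top_of_nonneg hs.le (ENNReal.ofNat_ne_top (n := 8)))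
      (measure_ne_top μ Set.univ))
  have hK0 : (K : ℝ≥0∞) ≠ 0 := by rintro h; simp [h] at hK
  obtain ⟨u, t, hu, hEt, hsum⟩ := exists_countable_cover_tsum_ediam_rpow_le hs hK0
    fun x (hx : maximalDensity μ s x = ⊤) ↦ hx ▸ ENNReal.natCast_lt_top K
  exact ⟨u, t, hu, hEt, ((ENNReal.mul_lt_mul_iff_right hK0 (ENNReal.natCast_ne_top K)).1
    (hsum.trans_lt hK)).le⟩

theorem fracMax_le_inv_mul_maximalDensity (n : ℕ) (α : ℝ)
    (μ : Measure (EuclideanSpace ℝ (Fin n))) (x : EuclideanSpace ℝ (Fin n)) :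
    fracMax n α μ x ≤
      (volume (ball (0 : EuclideanSpace ℝ (Fin n)) 1))⁻¹ * maximalDensity μ (n - α) x := by
  set c := volume (ball (0 : EuclideanSpace ℝ (Fin n)) 1)
  refine iSup₂_le fun r hr ↦ ?_
  set a := ENNReal.ofReal (r ^ α)
  set b := ENNReal.ofReal r ^ ((n : ℝ) - α)
  have ha0 : a ≠ 0 := by simpa [a] using Real.rpow_pos_of_pos hr α
  have hb0 : b ≠ 0 := (ENNReal.rpow_pos (ENNReal.ofReal_pos.2 hr) ENNReal.ofReal_ne_top).ne'
  have hb : b ≠ ⊤ :=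
    ENNReal.rpow_ne_top_of_ne_zero (ENNReal.ofReal_pos.2 hr).ne' ENNReal.ofReal_ne_top
  have hvol : volume (ball x r) = a * (b * c) := by
    rw [Measure.addHaar_ball_of_pos volume x hr, finrank_euclideanSpace_fin, ← mul_assoc]
    congr 1
    simp only [a, b]
    rw [ENNReal.ofReal_rpow_of_pos hr, ← ENNReal.ofReal_mul (Real.rpow_nonneg hr.le α),
      ← Real.rpow_add hr, add_sub_cancel, Real.rpow_natCast]
  calc a * μ (ball x r) / volume (ball x r) = c⁻¹ * (μ (ball x r) / b) := by
        rw [hvol, ENNReal.mul_div_mul_left _ _ ha0 ENNReal.ofReal_ne_top, div_eq_mul_inv,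
          ENNReal.mul_inv (.inl hb0) (.inl hb), div_eq_mul_inv]
        ring
    _ ≤ c⁻¹ * (μ (closedBall x r) / b) := by gcongr; exact ball_subset_closedBall
    _ ≤ c⁻¹ * maximalDensity μ (n - α) x := by
        gcongr
        exact le_iSup₂ (f := fun r (_ : 0 < r) ↦ μ (closedBall x r) / ENNReal.ofReal r ^ _) r hr

theorem hausdorffMeasure_fracMax_eq_top (n : ℕ) (α : ℝ) (hαn : α < n)
    (μ : Measure (EuclideanSpace ℝ (Fin n))) [IsFiniteMeasure μ] :
    μH[(n : ℝ) - α] {x : EuclideanSpace ℝ (Fin n) | fracMax n α μ x = ⊤} = 0 := by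
  have hc : (volume (ball (0 : EuclideanSpace ℝ (Fin n)) 1))⁻¹ ≠ ⊤ :=
    ENNReal.inv_ne_top.2 (measure_ball_pos volume _ one_pos).ne'
  refine measure_mono_null (fun x (hx : fracMax n α μ x = ⊤) ↦ ?_)
    (hausdorffMeasure_setOf_maximalDensity_eq_top μ (sub_pos.2 hαn))
  by_contra hx'
  exact (fracMax_le_inv_mul_maximalDensity n α μ x).not_gt
    (hx ▸ ENNReal.mul_lt_top hc.lt_top (lt_top_iff_ne_top.2 hx'))
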